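/- For every x in B_n, if x(l) = ∂D then either x = d_l or there is some k < l with x(k) = 0. -/
import Mathlib


/-- The three-element set `M = {0, D, ∂D}`. -/
inductive Mc : Type
  | z : Mc
  | D : Mc
  | pD : Mc
deriving DecidableEq

/-- The fixed-point-free involution `∂` exchanging `D` and `∂D`
(its value on `0` is irrelevant to the operations below). -/
def pd : Mc → Mc
  | Mc.D => Mc.pD
  | Mc.pD => Mc.D
  | Mc.z => Mc.z

/-- Height-1 meet on `M`: `x ∧ y = x` if `x = y`, else `0`. -/
def mmt (x y : Mc) : Mc := if x = y then x else Mc.z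

/-- `J(x,y,w) = x` if `x = y`; `x ∧ w` if `x = ∂y`; `0` otherwise. -/
def mJ (x y w : Mc) : Mc := if x = y then x else if x = pd y then mmt x w else Mc.z

/-- `J'(x,y,w) = x ∧ w` if `x = y`; `x` if `x = ∂y`; `0` otherwise. -/
def mJ' (x y w : Mc) : Mc := if x = y then mmt x w else if x = pd y then x else Mc.z

/-- Pointwise meet on `M^n`. -/
def vmt {n : ℕ} (x y : Fin n → Mc) : Fin n → Mc := fun l => mmt (x l) (y l)

/-- Pointwise `J` on `M^n`. -/
def vJ {n : ℕ} (x y w : Fin n → Mc) : Fin n → Mc := fun l => mJ (x l) (y l) (w l)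

/-- Pointwise `J'` on `M^n`. -/
def vJ' {n : ℕ} (x y w : Fin n → Mc) : Fin n → Mc := fun l => mJ' (x l) (y l) (w l)

/-- The zero tuple in `M^n`. -/
def vz (n : ℕ) : Fin n → Mc := fun _ => Mc.z

/-- `b_i`: `D` in (1-indexed) coordinates `1..i`, `0` afterwards. -/
def vb (n i : ℕ) : Fin n → Mc := fun l => if l.val < i then Mc.D else Mc.z

/-- `d_i`: `D` in coordinates `1..i-1`, `∂D` in coordinate `i`, `0` afterwards. -/
def vd (n i : ℕ) : Fin n → Mc := fun l =>
  if l.val + 1 < i then Mc.D else if l.val + 1 = i then Mc.pD else Mc.z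

/-- `c_i`: `0` in coordinate `1`, `D` in coordinates `2..i`, `0` afterwards. -/
def vc (n i : ℕ) : Fin n → Mc := fun l =>
  if l.val = 0 then Mc.z else if l.val < i then Mc.D else Mc.z

/-- `a = b_1 = (D,0,…,0)`. -/
def va (n : ℕ) : Fin n → Mc := vb n 1

/-- The subuniverse `B_n` of `M^n`, generated by `{a} ∪ {b_i, d_i : 2 ≤ i ≤ n}`
under the pointwise operations `∧`, `J`, `J'`. -/
inductive Bn (n : ℕ) : (Fin n → Mc) → Prop
  | gen_a : Bn n (va n)
  | gen_b (i : ℕ) (h2 : 2 ≤ i) (hn : i ≤ n) : Bn n (vb n i)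
  | gen_d (i : ℕ) (h2 : 2 ≤ i) (hn : i ≤ n) : Bn n (vd n i)
  | cmt {x y} : Bn n x → Bn n y → Bn n (vmt x y)
  | cJ {x y w} : Bn n x → Bn n y → Bn n w → Bn n (vJ x y w)
  | cJ' {x y w} : Bn n x → Bn n y → Bn n w → Bn n (vJ' x y w)

/-- The congruence of the algebra with universe `C` (a subuniverse of `M^n`) generated by the
pair `(a, b)`: the smallest equivalence relation on `C` containing `(a,b)` and compatible with
the operations `∧`, `J`, `J'`. -/
inductive CgC {n : ℕ} (C : (Fin n → Mc) → Prop) (a b : Fin n → Mc) :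
    (Fin n → Mc) → (Fin n → Mc) → Prop
  | base : CgC C a b a b
  | refl {x} (hx : C x) : CgC C a b x x
  | symm {x y} : CgC C a b x y → CgC C a b y x
  | trans {x y z} : CgC C a b x y → CgC C a b y z → CgC C a b x z
  | cmt {x x' y y'} : CgC C a b x x' → CgC C a b y y' → CgC C a b (vmt x y) (vmt x' y')
  | cJ {x x' y y' w w'} : CgC C a b x x' → CgC C a b y y' → CgC C a b w w' →
      CgC C a b (vJ x y w) (vJ x' y' w')
  | cJ' {x x' y y' w w'} : CgC C a b x x' → CgC C a b y y' → CgC C a b w w' →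
      CgC C a b (vJ' x y w) (vJ' x' y' w')

/-- Unary polynomials of the algebra with universe `C`: functions built by composition from
the operations `∧`, `J`, `J'`, constants from `C`, and the identity. -/
inductive PolyC {n : ℕ} (C : (Fin n → Mc) → Prop) : ((Fin n → Mc) → (Fin n → Mc)) → Prop
  | id : PolyC C id
  | const {c} (h : C c) : PolyC C (fun _ => c)
  | pmt {f g} : PolyC C f → PolyC C g → PolyC C (fun x => vmt (f x) (g x))
  | pJ {f g h} : PolyC C f → PolyC C g → PolyC C h → PolyC C (fun x => vJ (f x) (g x) (h x))
  | pJ' {f g h} : PolyC C f → PolyC C g → PolyC C h → PolyC C (fun x => vJ' (f x) (g x) (h x))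

/-- Fundamental translations of the algebra with universe `C`: unary polynomials obtained from
one of the operations `∧`, `J`, `J'` by fixing all but one argument at constants from `C`. -/
inductive FT {n : ℕ} (C : (Fin n → Mc) → Prop) : ((Fin n → Mc) → (Fin n → Mc)) → Prop
  | mtL {c} (h : C c) : FT C (fun x => vmt x c)
  | mtR {c} (h : C c) : FT C (fun x => vmt c x)
  | J1 {c d} (hc : C c) (hd : C d) : FT C (fun x => vJ x c d)
  | J2 {c d} (hc : C c) (hd : C d) : FT C (fun x => vJ c x d)
  | J3 {c d} (hc : C c) (hd : C d) : FT C (fun x => vJ c d x)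
  | J'1 {c d} (hc : C c) (hd : C d) : FT C (fun x => vJ' x c d)
  | J'2 {c d} (hc : C c) (hd : C d) : FT C (fun x => vJ' c x d)
  | J'3 {c d} (hc : C c) (hd : C d) : FT C (fun x => vJ' c d x)

/-- The support of a tuple: the set of coordinates where it is nonzero. -/
def suppF {n : ℕ} (x : Fin n → Mc) : Finset (Fin n) :=
  Finset.univ.filter (fun l => x l ≠ Mc.z)

lemma mmt_pD {a b : Mc} (h : mmt a b = Mc.pD) : a = Mc.pD := by
  revert h; cases a <;> cases b <;> decide

lemma mmt_z_left (b : Mc) : mmt Mc.z b = Mc.z := by cases b <;> decide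

lemma mmt_D_ne {b : Mc} (h : mmt Mc.D b ≠ Mc.z) : mmt Mc.D b = Mc.D := by
  revert h; cases b <;> decide

lemma mJ_pD {a b c : Mc} (h : mJ a b c = Mc.pD) : a = Mc.pD := by
  revert h; cases a <;> cases b <;> cases c <;> decide

lemma mJ_z_left (b c : Mc) : mJ Mc.z b c = Mc.z := by cases b <;> cases c <;> decide

lemma mJ_D_ne {b c : Mc} (h : mJ Mc.D b c ≠ Mc.z) : mJ Mc.D b c = Mc.D := by
  revert h; cases b <;> cases c <;> decide

lemma mJ'_pD {a b c : Mc} (h : mJ' a b c = Mc.pD) : a = Mc.pD := by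
  revert h; cases a <;> cases b <;> cases c <;> decide

lemma mJ'_z_left (b c : Mc) : mJ' Mc.z b c = Mc.z := by cases b <;> cases c <;> decide

lemma mJ'_D_ne {b c : Mc} (h : mJ' Mc.D b c ≠ Mc.z) : mJ' Mc.D b c = Mc.D := by
  revert h; cases b <;> cases c <;> decide

/-- The key invariant preserved by all operations. -/
def Qinv {n : ℕ} (x : Fin n → Mc) : Prop :=
  ∀ l : Fin n, x l = Mc.pD →
    (∃ k, k < l ∧ x k = Mc.z) ∨
      ((∀ k, k < l → x k = Mc.D) ∧ (∀ k, l < k → x k = Mc.z))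

lemma Bn_Qinv {n : ℕ} {x : Fin n → Mc} (hx : Bn n x) : Qinv x := by
  induction hx with
  | gen_a =>
      intro l hl
      simp only [va, vb] at hl
      split_ifs at hl <;> exact Mc.noConfusion hl
  | gen_b i h2 hn =>
      intro l hl
      simp only [vb] at hl
      split_ifs at hl <;> exact Mc.noConfusion hl
  | gen_d i h2 hn =>
      intro l hl
      simp only [vd] at hl
      split_ifs at hl with h1 h2'
      right
      refine ⟨fun k hk => ?_, fun k hk => ?_⟩
      · simp only [vd]; rw [if_pos (by omega)]
      · simp only [vd]; rw [if_neg (by omega), if_neg (by omega)]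
  | cmt hu hv ihu ihv =>
      rename_i u v
      intro l hl
      have hul : u l = Mc.pD := mmt_pD hl
      by_cases hz : ∃ k, k < l ∧ vmt u v k = Mc.z
      · exact Or.inl hz
      · push_neg at hz
        rcases ihu l hul with ⟨k, hk, huk⟩ | ⟨hD, hZ⟩
        · exact absurd (by simp only [vmt, huk]; exact mmt_z_left _) (hz k hk)
        · refine Or.inr ⟨fun k hk => ?_, fun k hk => ?_⟩
          · have h1 := hz k hk
            simp only [vmt, hD k hk] at h1 ⊢
            exact mmt_D_ne h1
          · simp only [vmt, hZ k hk]; exact mmt_z_left _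
  | cJ hu hv hw ihu ihv ihw =>
      rename_i u v w
      intro l hl
      have hul : u l = Mc.pD := mJ_pD hl
      by_cases hz : ∃ k, k < l ∧ vJ u v w k = Mc.z
      · exact Or.inl hz
      · push_neg at hz
        rcases ihu l hul with ⟨k, hk, huk⟩ | ⟨hD, hZ⟩
        · exact absurd (by simp only [vJ, huk]; exact mJ_z_left _ _) (hz k hk)
        · refine Or.inr ⟨fun k hk => ?_, fun k hk => ?_⟩
          · have h1 := hz k hk
            simp only [vJ, hD k hk] at h1 ⊢
            exact mJ_D_ne h1
          · simp only [vJ, hZ k hk]; exact mJ_z_left _ _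
  | cJ' hu hv hw ihu ihv ihw =>
      rename_i u v w
      intro l hl
      have hul : u l = Mc.pD := mJ'_pD hl
      by_cases hz : ∃ k, k < l ∧ vJ' u v w k = Mc.z
      · exact Or.inl hz
      · push_neg at hz
        rcases ihu l hul with ⟨k, hk, huk⟩ | ⟨hD, hZ⟩
        · exact absurd (by simp only [vJ', huk]; exact mJ'_z_left _ _) (hz k hk)
        · refine Or.inr ⟨fun k hk => ?_, fun k hk => ?_⟩
          · have h1 := hz k hk
            simp only [vJ', hD k hk] at h1 ⊢
            exact mJ'_D_ne h1
          · simp only [vJ', hZ k hk]; exact mJ'_z_left _ _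

/-- For every `x ∈ B_n`, if `x(l) = ∂D` then either `x = d_l` or there is some `k < l`
with `x(k) = 0`. -/
theorem Bn_pD_dichotomy {n : ℕ} (hn : 2 ≤ n) {x : Fin n → Mc} (hx : Bn n x) :
    ∀ l : Fin n, x l = Mc.pD →
      x = vd n (l.val + 1) ∨ ∃ k : Fin n, k < l ∧ x k = Mc.z := by
  intro l hl
  rcases Bn_Qinv hx l hl with ⟨k, hk, hkz⟩ | ⟨hD, hZ⟩
  · exact Or.inr ⟨k, hk, hkz⟩
  · left
    funext k
    rcases lt_trichotomy k.val l.val with h | h | h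
    · rw [hD k (Fin.lt_def.mpr h)]
      simp only [vd]; rw [if_pos (by omega)]
    · have : k = l := Fin.ext h
      subst this
      rw [hl]; simp [vd]
    · rw [hZ k (Fin.lt_def.mpr h)]
      simp only [vd]; rw [if_neg (by omega), if_neg (by omega)]
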